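/- Let $f$ be a probability density on $\mathbb{R}^n$ with differential entropy $h(X^n)$ (in bits). Then the erosion entropy of the positive strict hypograph of $f$ by the vertical unit segment satisfies $h_{\ominus \{0\}^n \times [0,1]}(\mathrm{hyp}_+ f) = h(X^n) + \log_2 e$. -/

import Mathlib

/-!
Eroding `hyp₊ f` by the segment `s • ({0} × [0, 1])` leaves `hyp₊ (f - s)`, whose volume is
`∫ (f - s)⁺`. So, with `φ a t = a * 1{t ≥ 0} - (a - 2⁻ᵗ)⁺`, the erosion entropy is
`∫ t, ∫ x, φ (f x) t`. For fixed `a > 0`, `φ a` is `a` times the signed indicator of the interval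
between `0` and `-log₂ a`, plus `2⁻ᵗ` on `(-log₂ a, ∞)`; hence `∫ |φ a| ≤ |a log₂ a| + a / ln 2`,
which justifies Fubini, and `∫ φ a = -a log₂ a + a / ln 2`. Integrating in `x` gives
`h(f) + 1 / ln 2 = h(f) + log₂ e`.
-/

open MeasureTheory Set Pointwise

/-- Erosion of `A` by `B`: `{x | B + x ⊆ A}`. -/
def erode {n : ℕ} (A B : Set ((Fin n → ℝ) × ℝ)) : Set ((Fin n → ℝ) × ℝ) :=
  {x | ∀ b ∈ B, b + x ∈ A}

/-- Erosion entropy of `A` by `B` (in `ℝ^n × ℝ ≅ ℝ^(n+1)`). -/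
noncomputable def erosEnt {n : ℕ} (A B : Set ((Fin n → ℝ) × ℝ)) : ℝ :=
  ∫ t : ℝ, ((if 0 ≤ t then (1 : ℝ) else 0)
    - (volume (erode A ((2 : ℝ) ^ (-t) • B))).toReal / (volume A).toReal)

open Real

lemma indicator_Ici_sub_indicator_Ioi_of_nonneg {c : ℝ} (hc : 0 ≤ c) :
    (Ici 0).indicator 1 - (Ioi c).indicator 1 = (Icc 0 c).indicator (1 : ℝ → ℝ) := by
  rw [← Ici_sdiff_Ioi, indicator_sdiff (Ioi_subset_Ici hc)]

lemma indicator_Ici_sub_indicator_Ioi_of_neg {c : ℝ} (hc : c < 0) :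
    (Ici 0).indicator 1 - (Ioi c).indicator 1 = -(Ioo c 0).indicator (1 : ℝ → ℝ) := by
  rw [← Ioi_sdiff_Ici, indicator_sdiff (Ici_subset_Ioi.mpr hc), neg_sub]

lemma integrable_indicator_Ici_sub_indicator_Ioi (c : ℝ) :
    Integrable ((Ici 0).indicator 1 - (Ioi c).indicator 1 : ℝ → ℝ) := by
  rcases le_or_gt 0 c with hc | hc
  · rw [indicator_Ici_sub_indicator_Ioi_of_nonneg hc]
    exact (integrable_indicator_iff measurableSet_Icc).mpr (integrableOn_const (by simp))
  · rw [indicator_Ici_sub_indicator_Ioi_of_neg hc]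
    exact ((integrable_indicator_iff measurableSet_Ioo).mpr (integrableOn_const (by simp))).neg

lemma integral_indicator_Ici_sub_indicator_Ioi (c : ℝ) :
    ∫ t, ((Ici 0).indicator 1 - (Ioi c).indicator 1 : ℝ → ℝ) t = c := by
  rcases le_or_gt 0 c with hc | hc
  · rw [indicator_Ici_sub_indicator_Ioi_of_nonneg hc, integral_indicator_one measurableSet_Icc]
    simp [hc]
  · rw [indicator_Ici_sub_indicator_Ioi_of_neg hc, Pi.neg_def, integral_neg,
      integral_indicator_one measurableSet_Ioo]
    simp [hc.le]

lemma integral_abs_indicator_Ici_sub_indicator_Ioi (c : ℝ) :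
    ∫ t, |((Ici 0).indicator 1 - (Ioi c).indicator 1 : ℝ → ℝ) t| = |c| := by
  have abs_indicator (s : Set ℝ) (t : ℝ) : |s.indicator (1 : ℝ → ℝ) t| = s.indicator 1 t :=
    abs_of_nonneg (indicator_nonneg (fun _ _ ↦ zero_le_one) t)
  rcases le_or_gt 0 c with hc | hc
  · simp only [indicator_Ici_sub_indicator_Ioi_of_nonneg hc, abs_indicator,
      integral_indicator_one measurableSet_Icc]
    simp [hc, abs_of_nonneg hc]
  · simp only [indicator_Ici_sub_indicator_Ioi_of_neg hc, Pi.neg_apply, abs_neg, abs_indicator,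
      integral_indicator_one measurableSet_Ioo]
    simp [hc.le, abs_of_neg hc]

lemma integrableOn_Ioi_rpow_neg {b : ℝ} (hb : 1 < b) (c : ℝ) :
    IntegrableOn (fun t ↦ b ^ (-t)) (Ioi c) := by
  simp_rw [rpow_def_of_pos (zero_lt_one.trans hb), mul_neg, ← neg_mul]
  exact exp_neg_integrableOn_Ioi c (log_pos hb)

lemma integral_Ioi_rpow_neg {b : ℝ} (hb : 1 < b) (c : ℝ) :
    ∫ t in Ioi c, b ^ (-t) = b ^ (-c) / log b := by
  simp_rw [rpow_def_of_pos (zero_lt_one.trans hb), mul_neg, ← neg_mul]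
  rw [integral_exp_mul_Ioi (neg_lt_zero.mpr (log_pos hb)), neg_div_neg_eq]

/-- The contribution of a point where the density equals `a` to the integrand of the erosion
entropy (in base `b`) at scale `t`. -/
noncomputable def erosionProfile (b a t : ℝ) : ℝ :=
  (if 0 ≤ t then a else 0) - max (a - b ^ (-t)) 0

lemma erosionProfile_zero_left {b : ℝ} (hb : 0 ≤ b) : erosionProfile b 0 = 0 := by
  ext t
  simp [erosionProfile, rpow_nonneg hb]

lemma erosionProfile_eq {b a : ℝ} (hb : 1 < b) (ha : 0 < a) :
    erosionProfile b a = a • ((Ici 0).indicator 1 - (Ioi (-logb b a)).indicator 1)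
      + (Ioi (-logb b a)).indicator (fun t ↦ b ^ (-t)) := by
  ext t
  have hmax : max (a - b ^ (-t)) 0 = if -logb b a < t then a - b ^ (-t) else 0 := by
    split_ifs with h <;> rw [neg_lt, lt_logb_iff_rpow_lt hb ha] at h
    · exact max_eq_left (sub_nonneg.mpr h.le)
    · exact max_eq_right (sub_nonpos.mpr (not_lt.mp h))
  simp only [erosionProfile, hmax, Pi.add_apply, Pi.smul_apply, Pi.sub_apply, indicator_apply,
    mem_Ici, mem_Ioi, Pi.one_apply, smul_eq_mul]
  split_ifs <;> ring

lemma integrable_erosionProfile {b a : ℝ} (hb : 1 < b) (ha : 0 ≤ a) :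
    Integrable (erosionProfile b a) := by
  rcases ha.eq_or_lt with rfl | ha
  · rw [erosionProfile_zero_left (zero_lt_one.trans hb).le]
    exact integrable_zero _ _ _
  rw [erosionProfile_eq hb ha]
  exact ((integrable_indicator_Ici_sub_indicator_Ioi _).smul a).add
    ((integrableOn_Ioi_rpow_neg hb _).integrable_indicator measurableSet_Ioi)

lemma integral_indicator_Ioi_neg_logb_rpow_neg {b a : ℝ} (hb : 1 < b) (ha : 0 < a) :
    ∫ t, (Ioi (-logb b a)).indicator (fun t ↦ b ^ (-t)) t = a / log b := by
  rw [integral_indicator measurableSet_Ioi, integral_Ioi_rpow_neg hb, neg_neg,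
    rpow_logb (zero_lt_one.trans hb) hb.ne' ha]

lemma integral_erosionProfile {b a : ℝ} (hb : 1 < b) (ha : 0 ≤ a) :
    ∫ t, erosionProfile b a t = -(a * logb b a) + a / log b := by
  rcases ha.eq_or_lt with rfl | ha
  · simp [erosionProfile_zero_left (zero_lt_one.trans hb).le]
  rw [erosionProfile_eq hb ha,
    integral_add' ((integrable_indicator_Ici_sub_indicator_Ioi _).smul a)
      ((integrableOn_Ioi_rpow_neg hb _).integrable_indicator measurableSet_Ioi),
    Pi.smul_def, integral_smul, integral_indicator_Ici_sub_indicator_Ioi,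
    integral_indicator_Ioi_neg_logb_rpow_neg hb ha, smul_eq_mul, mul_neg]

lemma integral_norm_erosionProfile_le {b a : ℝ} (hb : 1 < b) (ha : 0 ≤ a) :
    ∫ t, ‖erosionProfile b a t‖ ≤ ‖a * logb b a‖ + a / log b := by
  rcases ha.eq_or_lt with rfl | ha
  · simp [erosionProfile_zero_left (zero_lt_one.trans hb).le]
  set c := -logb b a
  have hind := integrable_indicator_Ici_sub_indicator_Ioi c
  have hexp := (integrableOn_Ioi_rpow_neg hb c).integrable_indicator measurableSet_Ioi
  have hexp_nonneg : 0 ≤ (Ioi c).indicator (fun t ↦ b ^ (-t)) :=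
    indicator_nonneg fun t _ ↦ rpow_nonneg (zero_lt_one.trans hb).le _
  calc ∫ t, ‖erosionProfile b a t‖
      ≤ ∫ t, (a * |((Ici 0).indicator 1 - (Ioi c).indicator 1 : ℝ → ℝ) t|
          + (Ioi c).indicator (fun t ↦ b ^ (-t)) t) := by
        refine integral_mono (integrable_erosionProfile hb ha.le).norm
          ((hind.abs.const_mul a).add hexp) fun t ↦ ?_
        rw [erosionProfile_eq hb ha]
        refine (norm_add_le _ _).trans_eq ?_
        rw [Pi.smul_apply, norm_smul, Real.norm_of_nonneg ha.le, Real.norm_eq_abs,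
          Real.norm_of_nonneg (hexp_nonneg t)]
    _ = ‖a * logb b a‖ + a / log b := by
        rw [integral_add (hind.abs.const_mul a) hexp, integral_const_mul,
          integral_abs_indicator_Ici_sub_indicator_Ioi,
          integral_indicator_Ioi_neg_logb_rpow_neg hb ha,
          abs_neg, Real.norm_eq_abs, abs_mul, abs_of_pos ha]

lemma measurable_erosionProfile (b : ℝ) :
    Measurable fun p : ℝ × ℝ ↦ erosionProfile b p.1 p.2 := by
  unfold erosionProfile
  exact (Measurable.ite (measurableSet_le measurable_const measurable_snd) measurable_fst
    measurable_const).sub (by fun_prop)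

def posHypograph {α : Type*} (f : α → ℝ) : Set (α × ℝ) :=
  {p | 0 < p.2 ∧ p.2 < f p.1}

lemma posHypograph_eq_regionBetween {α : Type*} (f : α → ℝ) :
    posHypograph f = regionBetween (fun _ ↦ 0) f univ := by
  ext p
  simp [posHypograph, regionBetween]

lemma measureReal_prod_posHypograph {α : Type*} [MeasurableSpace α] {μ : Measure α}
    [SFinite μ] {f : α → ℝ} (hfm : AEMeasurable f μ) (hf : Integrable (fun x ↦ max (f x) 0) μ) :
    (μ.prod volume).real (posHypograph f) = ∫ x, max (f x) 0 ∂μ := by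
  rw [posHypograph_eq_regionBetween, measureReal_def,
    volume_regionBetween_eq_lintegral aemeasurable_const.restrict hfm.restrict MeasurableSet.univ,
    Measure.restrict_univ,
    ← ENNReal.toReal_ofReal (integral_nonneg (f := fun x ↦ max (f x) 0) fun x ↦ le_max_right _ _),
    ofReal_integral_eq_lintegral_ofReal hf (ae_of_all _ fun x ↦ le_max_right _ _)]
  simp

lemma erode_posHypograph_smul_segment {n : ℕ} (f : (Fin n → ℝ) → ℝ) {s : ℝ} (hs : 0 ≤ s) :
    erode (posHypograph f) (s • ({0} ×ˢ Icc 0 1)) = posHypograph (fun x ↦ f x - s) := by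
  ext p
  simp only [erode, posHypograph, mem_ofPred_eq]
  constructor
  · intro h
    have bottom := h (s • (0, 0)) (smul_mem_smul_set ⟨rfl, left_mem_Icc.mpr zero_le_one⟩)
    have top := h (s • (0, 1)) (smul_mem_smul_set ⟨rfl, right_mem_Icc.mpr zero_le_one⟩)
    simp only [Prod.smul_mk, smul_zero, smul_eq_mul, mul_zero, mul_one, Prod.fst_add,
      Prod.snd_add, zero_add] at bottom top
    exact ⟨bottom.1, by linarith [top.2]⟩
  · rintro ⟨hp0, hpf⟩ _ ⟨⟨q1, q2⟩, ⟨rfl : q1 = 0, hq0, hq1⟩, rfl⟩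
    simp only [Prod.smul_mk, smul_zero, smul_eq_mul, Prod.fst_add, Prod.snd_add, zero_add]
    constructor <;> nlinarith

lemma integrable_erosionProfile_comp {α : Type*} [MeasurableSpace α] {μ : Measure α}
    [SFinite μ] {b : ℝ} (hb : 1 < b) {f : α → ℝ} (hfm : Measurable f) (hf0 : ∀ x, 0 ≤ f x)
    (hf : Integrable f μ) (hflog : Integrable (fun x ↦ f x * logb b (f x)) μ) :
    Integrable (Function.uncurry fun t x ↦ erosionProfile b (f x) t) (volume.prod μ) := by
  have hmeas : Measurable (Function.uncurry fun t x ↦ erosionProfile b (f x) t) :=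
    (measurable_erosionProfile b).comp ((hfm.comp measurable_snd).prodMk measurable_fst)
  refine (integrable_prod_iff' hmeas.aestronglyMeasurable).mpr
    ⟨ae_of_all _ fun x ↦ integrable_erosionProfile hb (hf0 x), ?_⟩
  refine (hflog.norm.add (hf.div_const (log b))).mono'
    (hmeas.norm.stronglyMeasurable.integral_prod_left').aestronglyMeasurable
    (ae_of_all _ fun x ↦ ?_)
  rw [Real.norm_of_nonneg (integral_nonneg fun t ↦ norm_nonneg _)]
  exact integral_norm_erosionProfile_le hb (hf0 x)

lemma integrable_max_sub_const_zero {α : Type*} [MeasurableSpace α] {μ : Measure α}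
    {f : α → ℝ} (hf : Integrable f μ) {s : ℝ} (hs : 0 ≤ s) :
    Integrable (fun x ↦ max (f x - s) 0) μ :=
  hf.mono ((hf.aestronglyMeasurable.sub aestronglyMeasurable_const).sup
    aestronglyMeasurable_const) (ae_of_all _ fun x ↦ by
      rw [Real.norm_eq_abs, Real.norm_eq_abs, abs_of_nonneg (le_max_right (f x - s) 0)]
      exact max_le (by linarith [le_abs_self (f x)]) (abs_nonneg _))

lemma erosEnt_posHypograph_eq_integral_integral {n : ℕ} {f : (Fin n → ℝ) → ℝ}
    (hfm : Measurable f) (hf0 : ∀ x, 0 ≤ f x) (hf1 : ∫ x, f x = 1) :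
    erosEnt (posHypograph f) ({0} ×ˢ Icc 0 1) = ∫ t, ∫ x, erosionProfile 2 (f x) t := by
  have hf : Integrable f := .of_integral_ne_zero (by rw [hf1]; exact one_ne_zero)
  have hvol (s : ℝ) (hs : 0 ≤ s) :
      (volume (posHypograph fun x ↦ f x - s)).toReal = ∫ x, max (f x - s) 0 := by
    rw [Measure.volume_eq_prod]
    exact measureReal_prod_posHypograph (hfm.sub_const s).aemeasurable
      (integrable_max_sub_const_zero hf hs)
  have hA : (volume (posHypograph f)).toReal = 1 := by
    simpa [max_eq_left (hf0 _), hf1] using hvol 0 le_rfl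
  refine integral_congr_ae (ae_of_all _ fun t ↦ ?_)
  dsimp only
  have h2t : (0 : ℝ) ≤ 2 ^ (-t) := rpow_nonneg zero_le_two _
  rw [erode_posHypograph_smul_segment f h2t, hvol _ h2t, hA, div_one]
  simp only [erosionProfile]
  rw [integral_sub _ (integrable_max_sub_const_zero hf h2t)]
  · split_ifs <;> simp [hf1]
  · split_ifs
    · exact hf
    · exact integrable_zero _ _ _

theorem erosEnt_hypograph {n : ℕ} (f : (Fin n → ℝ) → ℝ)
    (hmeas : Measurable f) (hnn : ∀ x, 0 ≤ f x) (hpdf : ∫ x, f x = 1)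
    (hint : Integrable (fun x => f x * Real.logb 2 (f x))) :
    erosEnt {p : (Fin n → ℝ) × ℝ | 0 < p.2 ∧ p.2 < f p.1}
        {p : (Fin n → ℝ) × ℝ | p.1 = 0 ∧ p.2 ∈ Icc (0 : ℝ) 1}
      = (-∫ x, f x * Real.logb 2 (f x)) + Real.logb 2 (Real.exp 1) := by
  have hf : Integrable f := .of_integral_ne_zero (by rw [hpdf]; exact one_ne_zero)
  change erosEnt (posHypograph f) ({0} ×ˢ Icc 0 1) = _
  rw [erosEnt_posHypograph_eq_integral_integral hmeas hnn hpdf,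
    integral_integral_swap (integrable_erosionProfile_comp one_lt_two hmeas hnn hf hint)]
  simp_rw [integral_erosionProfile one_lt_two (hnn _)]
  rw [integral_add (f := fun x ↦ -(f x * logb 2 (f x))) hint.neg (hf.div_const _), integral_neg,
    integral_div, hpdf, logb, log_exp]
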